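/- Let d ≥ 1, N ≥ 1, fix i ∈ {1,…,d}, let R(x) = x_i/|x|^{d+1} on ℝ^d∖{0}, and for x ≠ 0 let P_N(x,y) be the Taylor polynomial of degree N−1 in y, centered at y = 0, of y ↦ R(x−y). Let f ∈ L_N(ℝ^d) with constants C > 0, 0 ≤ ε < 1, and let 0 < δ < 1−ε. Then there exists a constant C' > 0 (depending only on d, N and δ) such that for every x ≠ 0, ∫_{{y : |y−x| ≥ |x|/2 and |y| ≥ |x|/2}} |f(y)|·|R(x−y) − P_N(x,y)| dy ≤ C'·|x|^{−d−N+ε+δ}·∫_{ℝ^d} |y|^{N−ε−δ}|f(y)| dy, where the last integral is finite. -/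

import Mathlib

/-!
On the region `‖x‖ ≤ 2‖x - y‖`, `‖x‖ ≤ 2‖y‖` no cancellation between `R(x - y)` and `P_N(x, y)` is
needed: each is bounded separately. The kernel is homogeneous of degree `-d`, so compactness of the
unit sphere gives `‖D^k R(x)‖ ≲ ‖x‖^{-d-k}`, and the `k`-th Taylor term is `≲ ‖x‖^{-d-k} ‖y‖^k`.
With `a = N - ε - δ ∈ [N - 1, N]` and `‖x‖ ≤ 2‖y‖`, every term, as well as `|R(x - y)| ≲ ‖x‖^{-d}`,
is `≲ ‖x‖^{-d-a} ‖y‖^a`. Integrating against `|f|` gives the bound, and `‖y‖^a |f(y)|` is integrable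
because it is `≲ (1 + ‖y‖)^{-d-δ}`.
-/

open MeasureTheory Filter Topology Real

noncomputable section

abbrev Ed (d : ℕ) := EuclideanSpace ℝ (Fin d)

/-- The class `L_N(ℝ^d)` with constants `C` and `ε`. -/
structure IsLN (d N : ℕ) (f : Ed d → ℝ) (C ε : ℝ) : Prop where
  smooth : ContDiff ℝ 1 f
  Cpos : 0 < C
  eps_nonneg : 0 ≤ ε
  eps_lt_one : ε < 1
  decay : ∀ x : Ed d, |f x| ≤ C * (1 + ‖x‖) ^ (-(d:ℝ) - N + ε)
  deriv_decay : ∀ (x : Ed d) (j : Fin d),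
      |fderiv ℝ f x (EuclideanSpace.single j 1)| ≤ C * (1 + ‖x‖) ^ (-(d:ℝ) - N - 1 + ε)
  moments : ∀ β : Fin d → ℕ, (∑ j, β j) < N →
      ∫ x : Ed d, (∏ j, (x j) ^ (β j)) * f x = 0

/-- The Riesz kernel `R(x) = x_i / ‖x‖^(d+1)`. -/
noncomputable def rieszKernel (d : ℕ) (i : Fin d) (x : Ed d) : ℝ := x i / ‖x‖ ^ (d + 1)

/-- `P_N(x,y)`: the Taylor polynomial of degree `N-1` in `y`, centered at `y = 0`, of the
function `y ↦ R(x - y)`. -/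
noncomputable def taylorP (d N : ℕ) (i : Fin d) (x y : Ed d) : ℝ :=
  ∑ k ∈ Finset.range N,
    ((k.factorial : ℝ))⁻¹ * iteratedFDeriv ℝ k (fun z => rieszKernel d i (x - z)) 0 (fun _ => y)

section Homogeneous

variable {E F : Type*} [NormedAddCommGroup E] [NormedSpace ℝ E]
  [NormedAddCommGroup F] [NormedSpace ℝ F]

theorem iteratedFDeriv_smul_eq_of_homogeneous {f : E → F} {s : ℝ}
    (hf : ∀ c : ℝ, 0 < c → ∀ z, f (c • z) = c ^ s • f z) {k : ℕ} {u : E}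
    (hu : ContDiffAt ℝ k f u) {c : ℝ} (hc : 0 < c) :
    iteratedFDeriv ℝ k f (c • u) = c ^ (s - k) • iteratedFDeriv ℝ k f u := by
  let e : E ≃L[ℝ] E := ContinuousLinearEquiv.smulLeft (Units.mk0 c hc.ne')
  have he : ∀ z, e z = c • z := fun z => rfl
  have hcomp : iteratedFDeriv ℝ k (f ∘ e) u =
      (iteratedFDeriv ℝ k f (c • u)).compContinuousLinearMap fun _ => (e : E →L[ℝ] E) := by
    have h := e.iteratedFDerivWithin_comp_right f uniqueDiffOn_univ (Set.mem_univ (e u)) k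
    simpa only [Set.preimage_univ, iteratedFDerivWithin_univ, he] using h
  have hscale : f ∘ e = c ^ s • f := funext fun z => by simp [he, hf c hc z]
  rw [hscale, iteratedFDeriv_const_smul_apply hu] at hcomp
  ext w
  have hw := congrArg (fun T => T fun j => c⁻¹ • w j) hcomp
  simp only [smul_apply, ContinuousMultilinearMap.compContinuousLinearMap_apply,
    ContinuousLinearEquiv.coe_coe, he, smul_inv_smul₀ hc.ne'] at hw
  rw [smul_apply, ← hw, (iteratedFDeriv ℝ k f u).map_smul_univ (fun _ => c⁻¹) w]
  simp only [Finset.prod_const, Finset.card_univ, Fintype.card_fin, smul_smul,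
    rpow_sub hc, rpow_natCast, inv_pow, div_eq_mul_inv]

theorem exists_norm_iteratedFDeriv_le_of_homogeneous [FiniteDimensional ℝ E] {f : E → F}
    {s : ℝ} (hf : ∀ c : ℝ, 0 < c → ∀ z, f (c • z) = c ^ s • f z) {k : ℕ}
    (hsmooth : ∀ x ≠ 0, ContDiffAt ℝ k f x) :
    ∃ M : ℝ, 0 ≤ M ∧ ∀ x ≠ 0, ‖iteratedFDeriv ℝ k f x‖ ≤ M * ‖x‖ ^ (s - k) := by
  have hcont : ContinuousOn (iteratedFDeriv ℝ k f) (Metric.sphere (0 : E) 1) :=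
    fun x hx => ((hsmooth x (ne_zero_of_mem_unit_sphere ⟨x, hx⟩)).continuousAt_iteratedFDeriv
      le_rfl).continuousWithinAt
  obtain ⟨M, hM⟩ := (isCompact_sphere (0 : E) 1).exists_bound_of_continuousOn hcont
  refine ⟨max M 0, le_max_right _ _, fun x hx => ?_⟩
  have hx0 : 0 < ‖x‖ := norm_pos_iff.2 hx
  set u : E := ‖x‖⁻¹ • x
  have hu : ‖u‖ = 1 := by simp [u, norm_smul, hx0.ne']
  have hxu : x = ‖x‖ • u := by simp [u, smul_inv_smul₀ hx0.ne']
  rw [hxu, iteratedFDeriv_smul_eq_of_homogeneous hf (hsmooth u (by simp [← norm_ne_zero_iff, hu]))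
    hx0, norm_smul, norm_of_nonneg (rpow_nonneg hx0.le _), ← hxu, mul_comm]
  gcongr
  exact (hM u (by simpa using hu)).trans (le_max_left _ _)

theorem norm_iteratedFDeriv_comp_sub_left (f : E → F) (k : ℕ) (x : E) :
    ‖iteratedFDeriv ℝ k (fun z => f (x - z)) 0‖ = ‖iteratedFDeriv ℝ k f x‖ := by
  have h := (LinearIsometryEquiv.neg ℝ (E := E)).norm_iteratedFDeriv_comp_right
    (fun z => f (x + z)) 0 k
  simpa [Function.comp_def, ← sub_eq_add_neg, iteratedFDeriv_comp_add_left] using h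

end Homogeneous

theorem integrableOn_and_setIntegral_le_mul_integral {α : Type*} [MeasurableSpace α]
    {μ : Measure α} {s : Set α} {F g : α → ℝ} {K : ℝ} (hs : MeasurableSet s)
    (hF : AEStronglyMeasurable F (μ.restrict s)) (hg : Integrable g μ) (hg0 : ∀ y, 0 ≤ g y)
    (hK : 0 ≤ K) (hFg : ∀ y ∈ s, ‖F y‖ ≤ K * g y) :
    IntegrableOn F s μ ∧ ∫ y in s, F y ∂μ ≤ K * ∫ y, g y ∂μ := by
  have hKg : Integrable (fun y => K * g y) μ := hg.const_mul K
  have hint : IntegrableOn F s μ :=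
    hKg.integrableOn.mono' hF ((ae_restrict_mem hs).mono hFg)
  refine ⟨hint, ?_⟩
  calc ∫ y in s, F y ∂μ ≤ ∫ y in s, K * g y ∂μ :=
        setIntegral_mono_on hint hKg.integrableOn hs fun y hy => (le_norm_self _).trans (hFg y hy)
    _ ≤ ∫ y, K * g y ∂μ := setIntegral_le_integral hKg (ae_of_all _ fun y => by
        have := hg0 y; positivity)
    _ = K * ∫ y, g y ∂μ := integral_const_mul K _

theorem rpow_sub_mul_rpow_le_two_pow_mul {r ρ s t a : ℝ} {n : ℕ} (hr : 0 < r) (hρ : 0 < ρ)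
    (hrρ : r ≤ 2 * ρ) (hta : t ≤ a) (han : a - t ≤ n) :
    r ^ (s - t) * ρ ^ t ≤ 2 ^ n * (r ^ (s - a) * ρ ^ a) := by
  have hsplit : r ^ (s - t) = r ^ (s - a) * r ^ (a - t) := by
    rw [← rpow_add hr, sub_add_sub_cancel]
  have hρa : ρ ^ (a - t) * ρ ^ t = ρ ^ a := by
    rw [← rpow_add hρ, sub_add_cancel]
  have h2 : (2 : ℝ) ^ (a - t) ≤ 2 ^ n := by
    rw [← rpow_natCast]; exact rpow_le_rpow_of_exponent_le one_le_two han
  calc r ^ (s - t) * ρ ^ t = r ^ (s - a) * (r ^ (a - t) * ρ ^ t) := by rw [hsplit]; ring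
    _ ≤ r ^ (s - a) * ((2 * ρ) ^ (a - t) * ρ ^ t) := by gcongr
    _ = 2 ^ (a - t) * (r ^ (s - a) * ρ ^ a) := by
        rw [mul_rpow zero_le_two hρ.le, ← hρa]; ring
    _ ≤ 2 ^ n * (r ^ (s - a) * ρ ^ a) := by gcongr

section Riesz

variable {d : ℕ} {i : Fin d}

theorem rieszKernel_smul {c : ℝ} (hc : 0 < c) (z : Ed d) :
    rieszKernel d i (c • z) = c ^ (-(d : ℝ)) • rieszKernel d i z := by
  rcases eq_or_ne z 0 with rfl | hz
  · simp [rieszKernel]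
  have hz' : ‖z‖ ≠ 0 := norm_ne_zero_iff.2 hz
  simp only [rieszKernel, PiLp.smul_apply, smul_eq_mul, norm_smul, norm_of_nonneg hc.le,
    rpow_neg hc.le, rpow_natCast]
  field_simp
  ring

theorem contDiffAt_rieszKernel {n : ℕ} {x : Ed d} (hx : x ≠ 0) :
    ContDiffAt ℝ n (rieszKernel d i) x :=
  ((EuclideanSpace.proj i).contDiff.contDiffAt).div ((contDiffAt_norm ℝ hx).pow _)
    (pow_ne_zero _ (norm_ne_zero_iff.2 hx))

theorem measurable_rieszKernel : Measurable (rieszKernel d i) := by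
  unfold rieszKernel; fun_prop

theorem abs_rieszKernel_le (z : Ed d) : |rieszKernel d i z| ≤ (‖z‖ ^ d)⁻¹ := by
  rcases eq_or_ne z 0 with rfl | hz
  · simp [rieszKernel]
  have hz' : 0 < ‖z‖ := norm_pos_iff.2 hz
  calc |rieszKernel d i z| = |z i| / ‖z‖ ^ (d + 1) := by simp [rieszKernel, abs_div]
    _ ≤ ‖z‖ / ‖z‖ ^ (d + 1) := by gcongr; exact PiLp.norm_apply_le z i
    _ = (‖z‖ ^ d)⁻¹ := by field_simp; ring

theorem abs_rieszKernel_le_of_le_two_mul_norm {x z : Ed d} (hx : x ≠ 0)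
    (hxz : ‖x‖ ≤ 2 * ‖z‖) : |rieszKernel d i z| ≤ 2 ^ d * ‖x‖ ^ (-(d : ℝ)) := by
  have hx0 : 0 < ‖x‖ := norm_pos_iff.2 hx
  calc |rieszKernel d i z| ≤ (‖z‖ ^ d)⁻¹ := abs_rieszKernel_le z
    _ ≤ ((‖x‖ / 2) ^ d)⁻¹ := by gcongr; linarith
    _ = 2 ^ d * ‖x‖ ^ (-(d : ℝ)) := by
        rw [rpow_neg hx0.le, rpow_natCast, div_pow, inv_div, div_eq_mul_inv]

theorem continuous_taylorP (N : ℕ) (x : Ed d) : Continuous (taylorP d N i x) := by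
  unfold taylorP; fun_prop

end Riesz

theorem exists_abs_iteratedFDeriv_rieszKernel_sub_le (d : ℕ) (i : Fin d) (k : ℕ) :
    ∃ M : ℝ, 0 ≤ M ∧ ∀ x y : Ed d, x ≠ 0 →
      |iteratedFDeriv ℝ k (fun z => rieszKernel d i (x - z)) 0 (fun _ => y)| ≤
        M * ‖x‖ ^ (-(d : ℝ) - k) * ‖y‖ ^ k := by
  obtain ⟨M, hM0, hM⟩ := exists_norm_iteratedFDeriv_le_of_homogeneous
    (fun c hc z => rieszKernel_smul (i := i) hc z) (k := k) fun x hx => contDiffAt_rieszKernel hx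
  refine ⟨M, hM0, fun x y hx => ?_⟩
  calc |iteratedFDeriv ℝ k (fun z => rieszKernel d i (x - z)) 0 (fun _ => y)|
      ≤ ‖iteratedFDeriv ℝ k (fun z => rieszKernel d i (x - z)) 0‖ * ∏ _j : Fin k, ‖y‖ :=
        (iteratedFDeriv ℝ k (fun z => rieszKernel d i (x - z)) 0).le_opNorm _
    _ ≤ M * ‖x‖ ^ (-(d : ℝ) - k) * ‖y‖ ^ k := by
        rw [norm_iteratedFDeriv_comp_sub_left, Finset.prod_const, Finset.card_fin]
        gcongr
        exact hM x hx

theorem exists_abs_rieszKernel_sub_taylorP_le (d N : ℕ) (i : Fin d) :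
    ∃ C' : ℝ, 0 < C' ∧ ∀ (a : ℝ) (x y : Ed d), 0 ≤ a → (N : ℝ) - 1 ≤ a → a ≤ N → x ≠ 0 →
      ‖x‖ ≤ 2 * ‖x - y‖ → ‖x‖ ≤ 2 * ‖y‖ →
      |rieszKernel d i (x - y) - taylorP d N i x y| ≤ C' * (‖x‖ ^ (-(d : ℝ) - a) * ‖y‖ ^ a) := by
  choose M hM0 hM using exists_abs_iteratedFDeriv_rieszKernel_sub_le d i
  refine ⟨2 ^ N * (2 ^ d + ∑ k ∈ Finset.range N, M k / k.factorial),
    mul_pos (by positivity) (add_pos_of_pos_of_nonneg (by positivity)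
      (Finset.sum_nonneg fun k _ => div_nonneg (hM0 k) (by positivity))), ?_⟩
  intro a x y ha0 haN1 haN hx hxy hy
  have hx0 : 0 < ‖x‖ := norm_pos_iff.2 hx
  have hy0 : 0 < ‖y‖ := by linarith
  set W := ‖x‖ ^ (-(d : ℝ) - a) * ‖y‖ ^ a
  have hkernel : |rieszKernel d i (x - y)| ≤ 2 ^ N * 2 ^ d * W := by
    have h := rpow_sub_mul_rpow_le_two_pow_mul (s := -(d : ℝ)) hx0 hy0 hy ha0 (by linarith)
    simp only [sub_zero, rpow_zero, mul_one] at h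
    calc |rieszKernel d i (x - y)| ≤ 2 ^ d * ‖x‖ ^ (-(d : ℝ)) :=
          abs_rieszKernel_le_of_le_two_mul_norm hx hxy
      _ ≤ 2 ^ d * (2 ^ N * W) := by gcongr
      _ = 2 ^ N * 2 ^ d * W := by ring
  have hterm : ∀ k ∈ Finset.range N,
      |(k.factorial : ℝ)⁻¹ *
          iteratedFDeriv ℝ k (fun z => rieszKernel d i (x - z)) 0 (fun _ => y)| ≤
        2 ^ N * (M k / k.factorial) * W := by
    intro k hk
    have hka : (k : ℝ) ≤ a := by
      have : (k : ℝ) + 1 ≤ N := by exact_mod_cast Finset.mem_range.1 hk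
      linarith
    have h := rpow_sub_mul_rpow_le_two_pow_mul (s := -(d : ℝ)) (n := N) hx0 hy0 hy hka
      (by linarith [k.cast_nonneg (α := ℝ)])
    rw [rpow_natCast] at h
    rw [abs_mul, abs_inv, Nat.abs_cast, inv_mul_eq_div, div_le_iff₀ (by positivity)]
    calc |iteratedFDeriv ℝ k (fun z => rieszKernel d i (x - z)) 0 (fun _ => y)|
        ≤ M k * (‖x‖ ^ (-(d : ℝ) - k) * ‖y‖ ^ k) := by rw [← mul_assoc]; exact hM k x y hx
      _ ≤ M k * (2 ^ N * W) := by gcongr; exact hM0 k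
      _ = 2 ^ N * (M k / k.factorial) * W * k.factorial := by field_simp
  calc |rieszKernel d i (x - y) - taylorP d N i x y|
      ≤ |rieszKernel d i (x - y)| + ∑ k ∈ Finset.range N, |(k.factorial : ℝ)⁻¹ *
          iteratedFDeriv ℝ k (fun z => rieszKernel d i (x - z)) 0 (fun _ => y)| :=
        (abs_sub _ _).trans (by unfold taylorP; gcongr; exact Finset.abs_sum_le_sum_abs _ _)
    _ ≤ 2 ^ N * 2 ^ d * W + ∑ k ∈ Finset.range N, 2 ^ N * (M k / k.factorial) * W := by
        gcongr with k hk
        exact hterm k hk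
    _ = 2 ^ N * (2 ^ d + ∑ k ∈ Finset.range N, M k / k.factorial) * W := by
        rw [← Finset.sum_mul, ← Finset.mul_sum]; ring

theorem IsLN.integrable_rpow_norm_mul_abs {d N : ℕ} {f : Ed d → ℝ} {C ε : ℝ}
    (hf : IsLN d N f C ε) {a : ℝ} (ha0 : 0 ≤ a) (ha : a < N - ε) :
    Integrable (fun y : Ed d => ‖y‖ ^ a * |f y|) := by
  have hdom : Integrable (fun y : Ed d => C * (1 + ‖y‖) ^ (-((d : ℝ) + (N - ε - a)))) :=
    (integrable_one_add_norm (by rw [finrank_euclideanSpace_fin]; linarith)).const_mul C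
  have hcont := hf.smooth.continuous
  refine hdom.mono' (by fun_prop) (ae_of_all _ fun y => ?_)
  have h1 : (0 : ℝ) < 1 + ‖y‖ := by positivity
  rw [norm_of_nonneg (by positivity)]
  calc ‖y‖ ^ a * |f y| ≤ (1 + ‖y‖) ^ a * (C * (1 + ‖y‖) ^ (-(d : ℝ) - N + ε)) := by
        gcongr
        · linarith
        · exact hf.decay y
    _ = C * (1 + ‖y‖) ^ (-((d : ℝ) + (N - ε - a))) := by
        rw [mul_left_comm, ← rpow_add h1]; ring_nf

theorem riesz_region_D2_bound_general (d N : ℕ) (hN : 1 ≤ N) (i : Fin d)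
    (δ : ℝ) (hδ : 0 < δ) :
    ∃ C' : ℝ, 0 < C' ∧ ∀ (f : Ed d → ℝ) (C ε : ℝ), IsLN d N f C ε → δ < 1 - ε →
      Integrable (fun y : Ed d => ‖y‖ ^ ((N : ℝ) - ε - δ) * |f y|) ∧
      ∀ x : Ed d, x ≠ 0 →
        IntegrableOn (fun y : Ed d => |f y| * |rieszKernel d i (x - y) - taylorP d N i x y|)
          {y : Ed d | ‖x‖ / 2 ≤ ‖y - x‖ ∧ ‖x‖ / 2 ≤ ‖y‖} ∧
        ∫ y in {y : Ed d | ‖x‖ / 2 ≤ ‖y - x‖ ∧ ‖x‖ / 2 ≤ ‖y‖},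
            |f y| * |rieszKernel d i (x - y) - taylorP d N i x y| ≤
          C' * ‖x‖ ^ (-(d:ℝ) - N + ε + δ) *
            ∫ y : Ed d, ‖y‖ ^ ((N : ℝ) - ε - δ) * |f y| := by
  obtain ⟨C', hC', hpt⟩ := exists_abs_rieszKernel_sub_taylorP_le d N i
  refine ⟨C', hC', fun f C ε hf hδε => ?_⟩
  have hN' : (1 : ℝ) ≤ N := by exact_mod_cast hN
  have ha0 : 0 ≤ (N : ℝ) - ε - δ := by linarith
  have hε := hf.eps_nonneg
  refine ⟨hf.integrable_rpow_norm_mul_abs ha0 (by linarith), fun x hx => ?_⟩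
  have hcont := hf.smooth.continuous
  rw [show -(d : ℝ) - N + ε + δ = -(d : ℝ) - (N - ε - δ) by ring]
  have hD : MeasurableSet {y : Ed d | ‖x‖ / 2 ≤ ‖y - x‖ ∧ ‖x‖ / 2 ≤ ‖y‖} :=
    (measurableSet_le (g := fun y => ‖y - x‖) measurable_const (by fun_prop)).inter
      (measurableSet_le (g := fun y => ‖y‖) measurable_const (by fun_prop))
  refine integrableOn_and_setIntegral_le_mul_integral hD
    ((hcont.abs.measurable.mul ((measurable_rieszKernel.comp (by fun_prop)).sub
      (continuous_taylorP N x).measurable).abs).aestronglyMeasurable)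
    (hf.integrable_rpow_norm_mul_abs ha0 (by linarith)) (fun y => by positivity)
    (by positivity) fun y ⟨hxy, hy⟩ => ?_
  rw [norm_of_nonneg (by positivity)]
  have h := hpt (N - ε - δ) x y ha0 (by linarith) (by linarith) hx
    (by rw [norm_sub_rev]; linarith) (by linarith)
  calc |f y| * |rieszKernel d i (x - y) - taylorP d N i x y|
      ≤ |f y| * (C' * (‖x‖ ^ (-(d : ℝ) - (N - ε - δ)) * ‖y‖ ^ ((N : ℝ) - ε - δ))) := by gcongr
    _ = _ := by ring

/-- Bound on the region `D₂ = {‖y-x‖ ≥ ‖x‖/2 and ‖y‖ ≥ ‖x‖/2}`: for `f ∈ L_N(ℝ^d)` and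
`0 < δ < 1 - ε`,
`∫_{D₂} |f(y)| |R(x-y) - P_N(x,y)| dy ≤ C' ‖x‖^{-d-N+ε+δ} ∫ ‖y‖^{N-ε-δ} |f(y)| dy`,
where `C'` depends only on `d`, `N` and `δ`, and the weighted integral is finite. -/
theorem riesz_region_D2_bound (d N : ℕ) (hd : 1 ≤ d) (hN : 1 ≤ N) (i : Fin d)
    (δ : ℝ) (hδ : 0 < δ) :
    ∃ C' : ℝ, 0 < C' ∧ ∀ (f : Ed d → ℝ) (C ε : ℝ), IsLN d N f C ε → δ < 1 - ε →
      Integrable (fun y : Ed d => ‖y‖ ^ ((N : ℝ) - ε - δ) * |f y|) ∧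
      ∀ x : Ed d, x ≠ 0 →
        IntegrableOn (fun y : Ed d => |f y| * |rieszKernel d i (x - y) - taylorP d N i x y|)
          {y : Ed d | ‖x‖ / 2 ≤ ‖y - x‖ ∧ ‖x‖ / 2 ≤ ‖y‖} ∧
        ∫ y in {y : Ed d | ‖x‖ / 2 ≤ ‖y - x‖ ∧ ‖x‖ / 2 ≤ ‖y‖},
            |f y| * |rieszKernel d i (x - y) - taylorP d N i x y| ≤
          C' * ‖x‖ ^ (-(d:ℝ) - N + ε + δ) *
            ∫ y : Ed d, ‖y‖ ^ ((N : ℝ) - ε - δ) * |f y| :=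
  riesz_region_D2_bound_general d N hN i δ hδ
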